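/- arXiv:2309.09200 — 4 statements merged into one kernel-verified Lean document; each statement's English description precedes it below -/
import Mathlib

section
/- For κ > 0 and any slowly varying function l satisfying a Potter-type bound l(n/x)/l(n) ≤ C(x^ε ∨ x^{-ε}) for some small ε < 1 with κ - ε > 0, the limit as n → ∞ of ∫₀ⁿ (1 - x/n)ⁿ · (l(n/x)/l(n)) · x^{κ-1} dx equals Γ(κ). -/
/-!
Pointwise, `(1 - x/n)ⁿ → e^{-x}` and slow variation gives `l(n/x)/l(n) → 1`, so the integrand
tends to the Euler integrand `e^{-x} x^{κ-1}` of `Γ(κ)`. Since `(1 - x/n)ⁿ ≤ e^{-x}` on `(0, n]`,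
the Potter bound dominates it by `C e^{-x} (x^{κ+ε-1} + x^{κ-ε-1})`, which is integrable
because `κ ± ε > 0`; dominated convergence concludes.
-/

open MeasureTheory Filter Real Set Topology

lemma max_rpow_rpow_neg_mul_rpow_le {x : ℝ} (hx : 0 < x) (ε s : ℝ) :
    max (x ^ ε) (x ^ (-ε)) * x ^ (s - 1) ≤ x ^ (s + ε - 1) + x ^ (s - ε - 1) := by
  rw [show s + ε - 1 = ε + (s - 1) by ring, show s - ε - 1 = -ε + (s - 1) by ring,
    rpow_add hx, rpow_add hx, ← add_mul]
  gcongr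
  exact max_le_add_of_nonneg (rpow_nonneg hx.le _) (rpow_nonneg hx.le _)

lemma norm_one_sub_div_pow_mul_mul_rpow_le {n : ℕ} {x y C ε κ : ℝ} (hC : 0 ≤ C)
    (hx : x ∈ Ioc 0 (n : ℝ)) (hy : ‖y‖ ≤ C * max (x ^ ε) (x ^ (-ε))) :
    ‖(1 - x / n) ^ n * y * x ^ (κ - 1)‖ ≤
      C * (exp (-x) * (x ^ (κ + ε - 1) + x ^ (κ - ε - 1))) := by
  have hn : (0 : ℝ) < n := hx.1.trans_le hx.2
  have h₀ : 0 ≤ 1 - x / n := sub_nonneg.2 ((div_le_one hn).2 hx.2)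
  rw [norm_mul, norm_mul, norm_of_nonneg (pow_nonneg h₀ n),
    norm_of_nonneg (rpow_nonneg hx.1.le _)]
  calc (1 - x / n) ^ n * ‖y‖ * x ^ (κ - 1)
      ≤ exp (-x) * (C * max (x ^ ε) (x ^ (-ε))) * x ^ (κ - 1) := by
        gcongr
        · exact rpow_nonneg hx.1.le _
        · exact one_sub_div_pow_le_exp_neg hx.2
    _ = C * (exp (-x) * (max (x ^ ε) (x ^ (-ε)) * x ^ (κ - 1))) := by ring
    _ ≤ C * (exp (-x) * (x ^ (κ + ε - 1) + x ^ (κ - ε - 1))) := by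
        gcongr
        exact max_rpow_rpow_neg_mul_rpow_le hx.1 ε κ

lemma integrableOn_exp_neg_mul_rpow_add_rpow {κ ε : ℝ} (h : |ε| < κ) :
    IntegrableOn (fun x ↦ exp (-x) * (x ^ (κ + ε - 1) + x ^ (κ - ε - 1))) (Ioi 0) := by
  obtain ⟨h₁, h₂⟩ := abs_lt.1 h
  simp_rw [mul_add]
  exact (GammaIntegral_convergent (by linarith : 0 < κ + ε)).add
    (GammaIntegral_convergent (by linarith : 0 < κ - ε))

theorem tendsto_integral_one_sub_div_pow_mul_rpow {κ ε C : ℝ} (hκ : |ε| < κ) (hC : 0 ≤ C)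
    (h : ℕ → ℝ → ℝ) (h_meas : ∀ n, Measurable (h n))
    (h_lim : ∀ x, 0 < x → Tendsto (fun n ↦ h n x) atTop (𝓝 1))
    (h_bound : ∀ᶠ n : ℕ in atTop, ∀ x ∈ Ioc 0 (n : ℝ),
      ‖h n x‖ ≤ C * max (x ^ ε) (x ^ (-ε))) :
    Tendsto (fun n : ℕ ↦ ∫ x in Ioc 0 (n : ℝ), (1 - x / n) ^ n * h n x * x ^ (κ - 1))
      atTop (𝓝 (Gamma κ)) := by
  set F : ℕ → ℝ → ℝ := fun n ↦
    (Ioc 0 (n : ℝ)).indicator fun x ↦ (1 - x / n) ^ n * h n x * x ^ (κ - 1)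
  have hF (n : ℕ) : ∫ x in Ioc 0 (n : ℝ), (1 - x / n) ^ n * h n x * x ^ (κ - 1) =
      ∫ x in Ioi 0, F n x := by
    rw [integral_indicator measurableSet_Ioc,
      Measure.restrict_restrict_of_subset Ioc_subset_Ioi_self]
  simp only [hF, Gamma_eq_integral ((abs_nonneg ε).trans_lt hκ)]
  refine tendsto_integral_filter_of_dominated_convergence _ (.of_forall fun n ↦ ?_) ?_
    ((integrableOn_exp_neg_mul_rpow_add_rpow hκ).const_mul C) ?_
  · have : Measurable fun x ↦ (1 - x / n) ^ n * h n x * x ^ (κ - 1) := by fun_prop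
    exact this.aestronglyMeasurable.indicator measurableSet_Ioc
  · filter_upwards [h_bound] with n hn
    filter_upwards [ae_restrict_mem measurableSet_Ioi] with x (hx : 0 < x)
    dsimp only [F]
    by_cases hxn : x ∈ Ioc 0 (n : ℝ)
    · rw [indicator_of_mem hxn]
      exact norm_one_sub_div_pow_mul_mul_rpow_le hC hxn (hn x hxn)
    · rw [indicator_of_notMem hxn, norm_zero]
      positivity
  · filter_upwards [ae_restrict_mem measurableSet_Ioi] with x (hx : 0 < x)
    have h_eq : ∀ᶠ n : ℕ in atTop, (1 - x / n) ^ n * h n x * x ^ (κ - 1) = F n x := by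
      filter_upwards [eventually_ge_atTop ⌈x⌉₊] with n hn
      dsimp only [F]
      rw [indicator_of_mem (show x ∈ Ioc 0 (n : ℝ) from ⟨hx, Nat.ceil_le.1 hn⟩)]
    have h_exp : Tendsto (fun n : ℕ ↦ (1 - x / n) ^ n) atTop (𝓝 (exp (-x))) :=
      (tendsto_one_add_div_pow_exp (-x)).congr fun n ↦ by rw [neg_div, ← sub_eq_add_neg]
    simpa using ((h_exp.mul (h_lim x hx)).mul_const (x ^ (κ - 1))).congr' h_eq

theorem stmt0_general (κ : ℝ) (l : ℝ → ℝ)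
    (hl_pos : ∀ x, 0 < l x) (hl_meas : Measurable l)
    (hl_sv : ∀ lam : ℝ, 0 < lam →
      Tendsto (fun x => l (lam * x) / l x) atTop (nhds 1))
    (C ε : ℝ) (hC : 0 < C) (hε : 0 < ε) (hεκ : ε < κ)
    (hPotter : ∀ᶠ n : ℕ in atTop, ∀ x ∈ Set.Ioc (0:ℝ) (n:ℝ),
      l ((n:ℝ) / x) / l n ≤ C * max (x ^ ε) (x ^ (-ε))) :
    Tendsto (fun n : ℕ => ∫ x in Set.Ioc (0:ℝ) (n:ℝ),
        (1 - x / (n:ℝ)) ^ n * (l ((n:ℝ) / x) / l n) * x ^ (κ - 1))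
      atTop (nhds (Real.Gamma κ)) := by
  refine tendsto_integral_one_sub_div_pow_mul_rpow (abs_lt.2 ⟨by linarith, hεκ⟩) hC.le
    (fun n x ↦ l (n / x) / l n)
    (fun n ↦ (hl_meas.comp (measurable_const.div measurable_id)).div_const _) (fun x hx ↦ ?_) ?_
  · refine ((hl_sv x⁻¹ (inv_pos.2 hx)).comp tendsto_natCast_atTop_atTop).congr fun n ↦ ?_
    simp [div_eq_inv_mul]
  · filter_upwards [hPotter] with n hn x hx
    rw [norm_of_nonneg (div_pos (hl_pos _) (hl_pos _)).le]
    exact hn x hx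

/-- For `κ > 0` and a positive, measurable, slowly varying function `l`
satisfying a Potter-type bound, `∫₀ⁿ (1 - x/n)ⁿ (l(n/x)/l(n)) x^{κ-1} dx → Γ(κ)`. -/
theorem stmt0 (κ : ℝ) (hκ : 0 < κ) (l : ℝ → ℝ)
    (hl_pos : ∀ x, 0 < l x) (hl_meas : Measurable l)
    (hl_sv : ∀ lam : ℝ, 0 < lam →
      Tendsto (fun x => l (lam * x) / l x) atTop (nhds 1))
    (C ε : ℝ) (hC : 0 < C) (hε : 0 < ε) (hε1 : ε < 1) (hεκ : ε < κ)
    (hPotter : ∀ᶠ n : ℕ in atTop, ∀ x ∈ Set.Ioc (0:ℝ) (n:ℝ),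
      l ((n:ℝ) / x) / l n ≤ C * max (x ^ ε) (x ^ (-ε))) :
    Tendsto (fun n : ℕ => ∫ x in Set.Ioc (0:ℝ) (n:ℝ),
        (1 - x / (n:ℝ)) ^ n * (l ((n:ℝ) / x) / l n) * x ^ (κ - 1))
      atTop (nhds (Real.Gamma κ)) :=
  stmt0_general κ l hl_pos hl_meas hl_sv C ε hC hε hεκ hPotter
end

section
/- Let m > 1 and define the matrix m_{ij} = ((i+j-1)!/((i-1)!·j!)) · m^{i+1}/(m+1)^{i+j} for i, j ≥ 1. Then the vectors a_i = (m-1)·m^{-i} and b_i = (1 - 1/m)·i satisfy: (1) Σ_{i≥1} a_i = 1; (2) Σ_{i≥1} a_i·b_i = 1; (3) Σ_{i≥1} a_i·m_{ij} = a_j for all j ≥ 1 (left eigenvector with eigenvalue 1); (4) Σ_{j≥1} m_{ij}·b_j = b_i for all i ≥ 1 (right eigenvector with eigenvalue 1). -/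
/-!
Every identity is an instance of the negative binomial series
`∑ₙ C(n + k, k) / q ^ (n + k + 1) = 1 / (q - 1) ^ (k + 1)` for `q > 1`:
with `q = m` and `k = 0, 1` for the normalisations, and with `q = m + 1` for the two
eigenvector equations, where `C(i + j, j + 1) (j + 1) = i C(i + j, i)` brings the
right eigenvector equation into that shape.
-/

noncomputable section

def meanMatrix (m : ℝ) (i j : ℕ) : ℝ :=
  (Nat.choose (i + j - 1) j : ℝ) * m ^ (i + 1) / (m + 1) ^ (i + j)

def meanLeftEigvec (m : ℝ) (i : ℕ) : ℝ := (m - 1) / m ^ i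

def meanRightEigvec (m : ℝ) (i : ℕ) : ℝ := (1 - 1 / m) * i

theorem hasSum_choose_div_pow {q : ℝ} (hq : 1 < q) (k : ℕ) :
    HasSum (fun n : ℕ => ((n + k).choose k : ℝ) / q ^ (n + k + 1)) (1 / (q - 1) ^ (k + 1)) := by
  have hq0 : q ≠ 0 := by positivity
  have hr : ‖1 / q‖ < 1 := by
    rw [Real.norm_eq_abs, abs_of_pos (by positivity), div_lt_one (by positivity)]
    exact hq
  have h := (hasSum_choose_mul_geometric_of_norm_lt_one k hr).mul_left ((1 / q) ^ (k + 1))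
  rw [mul_one_div, ← div_pow, div_div, mul_sub, mul_one_div_cancel hq0, mul_one,
    one_div_pow (q - 1)] at h
  refine h.congr_fun fun n => ?_
  rw [one_div_pow, one_div_pow, add_right_comm, pow_add]
  field_simp
  ring

theorem Nat.add_choose_succ_mul_succ (i j : ℕ) :
    (i + j).choose (j + 1) * (j + 1) = (j + i).choose i * i := by
  rw [Nat.choose_succ_right_eq, Nat.add_sub_cancel, add_comm i j, Nat.choose_symm_add]

theorem hasSum_meanLeftEigvec {m : ℝ} (hm : 1 < m) :
    HasSum (fun i : ℕ => meanLeftEigvec m (i + 1)) 1 := by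
  have hm1 : m - 1 ≠ 0 := sub_ne_zero.mpr hm.ne'
  have h := (hasSum_choose_div_pow hm 0).mul_left (m - 1)
  rw [zero_add, pow_one, mul_one_div_cancel hm1] at h
  refine h.congr_fun fun i => ?_
  simp [meanLeftEigvec, div_eq_mul_inv]

theorem hasSum_meanLeftEigvec_mul_meanRightEigvec {m : ℝ} (hm : 1 < m) :
    HasSum (fun i : ℕ => meanLeftEigvec m (i + 1) * meanRightEigvec m (i + 1)) 1 := by
  have hm1 : m - 1 ≠ 0 := sub_ne_zero.mpr hm.ne'
  have h := (hasSum_choose_div_pow hm 1).mul_left ((m - 1) ^ 2)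
  rw [show (m - 1) ^ 2 * (1 / (m - 1) ^ (1 + 1)) = 1 by field_simp] at h
  refine h.congr_fun fun i => ?_
  simp only [meanLeftEigvec, meanRightEigvec, Nat.choose_one_right]
  push_cast
  field_simp
  ring

theorem hasSum_meanLeftEigvec_mul_meanMatrix {m : ℝ} (hm : 0 < m) (j : ℕ) :
    HasSum (fun i : ℕ => meanLeftEigvec m (i + 1) * meanMatrix m (i + 1) j)
      (meanLeftEigvec m j) := by
  have h := (hasSum_choose_div_pow (q := m + 1) (by linarith) j).mul_left ((m - 1) * m)
  rw [show (m - 1) * m * (1 / (m + 1 - 1) ^ (j + 1)) = meanLeftEigvec m j by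
    simp only [meanLeftEigvec, add_sub_cancel_right]
    field_simp
    ring] at h
  refine h.congr_fun fun i => ?_
  have hidx : i + 1 + j - 1 = i + j := by omega
  simp only [meanLeftEigvec, meanMatrix, hidx]
  rw [add_right_comm i 1 j]
  field_simp
  ring

theorem hasSum_meanMatrix_mul_meanRightEigvec {m : ℝ} (hm : 0 < m) (i : ℕ) :
    HasSum (fun j : ℕ => meanMatrix m i (j + 1) * meanRightEigvec m (j + 1))
      (meanRightEigvec m i) := by
  have h := (hasSum_choose_div_pow (q := m + 1) (by linarith) i).mul_left ((m - 1) * m ^ i * i)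
  rw [show (m - 1) * m ^ i * i * (1 / (m + 1 - 1) ^ (i + 1)) = meanRightEigvec m i by
    simp only [meanRightEigvec, add_sub_cancel_right]
    field_simp
    ring] at h
  refine h.congr_fun fun j => ?_
  have hidx : i + (j + 1) - 1 = i + j := by omega
  have hchoose : ((i + j).choose (j + 1) : ℝ) * ((j + 1 : ℕ) : ℝ) = (j + i).choose i * i := by
    exact_mod_cast Nat.add_choose_succ_mul_succ i j
  simp only [meanMatrix, meanRightEigvec, hidx]
  rw [show i + (j + 1) = j + i + 1 by omega]
  calc _ = ((i + j).choose (j + 1) : ℝ) * ((j + 1 : ℕ) : ℝ) * (m ^ (i + 1) * (1 - 1 / m))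
        / (m + 1) ^ (j + i + 1) := by ring
    _ = _ := by
      rw [hchoose]
      field_simp
      ring

end

/-- eigenvector identities for the mean matrix
`m_{ij} = binom(i+j-1, j) m^{i+1}/(m+1)^{i+j}` with `a_i = (m-1)m^{-i}`,
`b_i = (1-1/m) i`. -/
theorem stmt5 (m : ℝ) (hm : 1 < m)
    (M : ℕ → ℕ → ℝ)
    (hM : ∀ i j, M i j = (Nat.choose (i + j - 1) j : ℝ) * m ^ (i + 1) / (m + 1) ^ (i + j))
    (a b : ℕ → ℝ)
    (ha : ∀ i, a i = (m - 1) / m ^ i)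
    (hb : ∀ i, b i = (1 - 1 / m) * i) :
    (∑' i : ℕ, a (i + 1)) = 1 ∧
    (∑' i : ℕ, a (i + 1) * b (i + 1)) = 1 ∧
    (∀ j : ℕ, 1 ≤ j → (∑' i : ℕ, a (i + 1) * M (i + 1) j) = a j) ∧
    (∀ i : ℕ, 1 ≤ i → (∑' j : ℕ, M i (j + 1) * b (j + 1)) = b i) := by
  obtain rfl : M = meanMatrix m := funext₂ hM
  obtain rfl : a = meanLeftEigvec m := funext ha
  obtain rfl : b = meanRightEigvec m := funext hb
  have hm0 : 0 < m := by linarith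
  exact ⟨(hasSum_meanLeftEigvec hm).tsum_eq,
    (hasSum_meanLeftEigvec_mul_meanRightEigvec hm).tsum_eq,
    fun j _ => (hasSum_meanLeftEigvec_mul_meanMatrix hm0 j).tsum_eq,
    fun i _ => (hasSum_meanMatrix_mul_meanRightEigvec hm0 i).tsum_eq⟩
end

section
/- Let m > 1 and let (β_k)_{k≥0} be the Markov chain on the positive integers with transition probabilities p̂_{ij} = (b_i/b_j)·m_{ij}, where m_{ij} = binom(i+j-1, j)·m^{i+1}/(m+1)^{i+j} and b_i = (1-1/m)·i. Then the measure (â_i)_{i≥1} with â_i = m^{-i}/i is a stationary (invariant) measure for this chain: Σ_{i≥1} â_i · p̂_{ij} = â_j for all j ≥ 1. -/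
open scoped BigOperators

/-!
Since `b_i / b_j = i / j`, the weighted transition `â_i p̂_{ij}` collapses to
`(m / j) · C(i+j-1, j) / (m+1)^(i+j)`. Summing over `i` is the negative binomial series
`∑ₖ C(k+j, j) xᵏ = (1 - x)^{-(j+1)}` at `x = 1/(m+1)`, which gives `(m / j) · m^{-(j+1)} = â_j`.
-/

theorem tsum_choose_add_div_add_one_pow {m : ℝ} (hm : 0 < m) (j : ℕ) :
    ∑' k : ℕ, ((k + j).choose j : ℝ) / (m + 1) ^ (k + j + 1) = (m ^ (j + 1))⁻¹ := by
  have hx : ‖(m + 1)⁻¹‖ < 1 := by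
    rw [Real.norm_of_nonneg (by positivity)]
    exact inv_lt_one_of_one_lt₀ (by linarith)
  have hterm : ∀ k : ℕ, ((k + j).choose j : ℝ) / (m + 1) ^ (k + j + 1)
      = ((m + 1) ^ (j + 1))⁻¹ * (((k + j).choose j : ℝ) * (m + 1)⁻¹ ^ k) := by
    intro k
    rw [inv_pow]
    field_simp
    ring
  rw [tsum_congr hterm, tsum_mul_left, tsum_choose_mul_geometric_of_norm_lt_one j hx,
    show 1 - (m + 1)⁻¹ = m / (m + 1) by field_simp; ring,
    div_pow]
  field_simp

/-- `â_i = m^{-i}/i` is a stationary measure for the chain with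
transition probabilities `p̂_{ij} = (b_i/b_j) m_{ij}`. -/
theorem stmt6 (m : ℝ) (hm : 1 < m)
    (M : ℕ → ℕ → ℝ)
    (hM : ∀ i j, M i j = (Nat.choose (i + j - 1) j : ℝ) * m ^ (i + 1) / (m + 1) ^ (i + j))
    (b : ℕ → ℝ) (hb : ∀ i, b i = (1 - 1 / m) * i)
    (phat : ℕ → ℕ → ℝ) (hphat : ∀ i j, phat i j = (b i / b j) * M i j)
    (ahat : ℕ → ℝ) (hahat : ∀ i, ahat i = 1 / (m ^ i * i)) :
    ∀ j : ℕ, 1 ≤ j → (∑' i : ℕ, ahat (i + 1) * phat (i + 1) j) = ahat j := by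
  intro j hj
  have hm0 : 0 < m := by linarith
  have hb0 : 1 - 1 / m ≠ 0 := by
    rw [sub_ne_zero, ne_comm, one_div, inv_ne_one]
    exact hm.ne'
  have hj0 : (j : ℝ) ≠ 0 := by exact_mod_cast (Nat.one_le_iff_ne_zero.mp hj)
  have hterm : ∀ i : ℕ, ahat (i + 1) * phat (i + 1) j
      = m / j * (((i + j).choose j : ℝ) / (m + 1) ^ (i + j + 1)) := by
    intro i
    rw [hahat, hphat, hM, hb, hb, mul_div_mul_left _ _ hb0, show i + 1 + j - 1 = i + j by omega,
      add_right_comm i 1 j]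
    push_cast
    field_simp
    ring
  rw [tsum_congr hterm, tsum_mul_left, tsum_choose_add_div_add_one_pow hm0, hahat]
  field_simp
  ring
end

section
/- Let S_x = ∫_{A(m+1)/x}^{1} (x/β)·(1 - y)^{x/β - 1}·l(1/y)·y^{κ-1} dy for fixed β ≥ 1, m > 1, A > 0, κ ∈ (1,2), and l slowly varying with Potter bounds. Then as x → ∞, S_x ~ (x/β)^{-(κ-1)}·l(x)·∫_{A(m+1)/β}^{∞} e^{-y}·y^{κ-1} dy (up to the stated normalization); in particular S_x = O(x^{-(κ-1)} l(x)) with a constant that tends to 0 as A → ∞. -/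
open MeasureTheory Filter Asymptotics Set Topology Real

/-!
Substituting `y = u / (x/β)` writes `S_x` as `(x/β)^{-(κ-1)} l(x)` times
`∫_c^{x/β} (1 - u/(x/β))^{x/β-1} (l(x/(βu)) / l(x)) u^{κ-1} du` with `c = A(m+1)/β`.
This integrand tends to `e^{-u} u^{κ-1}`, since `(1 - u/s)^{s-1} → e^{-u}` and `l` is slowly
varying. For `x ≥ max 1 (2β)` it is dominated by
`C (β^ε u^{κ-1+ε} + (βc)^{-ε} u^{κ-1}) e^{-u/2}`: the power is at most `e^{-u/2}` once `s ≥ 2`,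
and the Potter bound applies with `y = βu ≥ βc`, which keeps the `y^{-ε}` branch bounded.
Dominated convergence then gives the limit, which is positive.
-/

theorem one_sub_div_rpow_le_exp_neg_half {s t : ℝ} (hs : 2 ≤ s) (ht : 0 ≤ t) (hts : t ≤ s) :
    (1 - t / s) ^ (s - 1) ≤ exp (-(t / 2)) := by
  have hs0 : 0 < s := by linarith
  rcases (sub_nonneg.2 ((div_le_one hs0).2 hts)).eq_or_lt with hbase | hbase
  · rw [← hbase, zero_rpow (by linarith)]
    positivity
  rw [rpow_def_of_pos hbase, exp_le_exp]
  calc log (1 - t / s) * (s - 1) ≤ -(t / s) * (s - 1) := by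
        gcongr
        · linarith
        · linarith [log_le_sub_one_of_pos hbase]
    _ = -t + t / s := by field_simp; ring
    _ ≤ -(t / 2) := by
        have : t / s ≤ t / 2 := div_le_div_of_nonneg_left ht two_pos hs
        linarith

theorem tendsto_one_sub_div_rpow_sub_one_exp (t : ℝ) :
    Tendsto (fun s : ℝ => (1 - t / s) ^ (s - 1)) atTop (𝓝 (exp (-t))) := by
  have hbase : Tendsto (fun s : ℝ => 1 - t / s) atTop (𝓝 1) := by
    simpa using (tendsto_const_nhds (x := (1:ℝ))).sub (tendsto_const_nhds.div_atTop tendsto_id)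
  have hpow : Tendsto (fun s : ℝ => (1 - t / s) ^ s) atTop (𝓝 (exp (-t))) := by
    simpa only [neg_div, ← sub_eq_add_neg] using tendsto_one_add_div_rpow_exp (-t)
  have hquot := hpow.div hbase one_ne_zero
  rw [div_one] at hquot
  refine hquot.congr' ?_
  filter_upwards [hbase.eventually (eventually_gt_nhds one_pos)] with s hs
  rw [Pi.div_apply, rpow_sub hs, rpow_one]

theorem integral_Ioc_comp_mul_left {E : Type*} [NormedAddCommGroup E] [NormedSpace ℝ E]
    (g : ℝ → E) (a b : ℝ) {r : ℝ} (hr : 0 < r) :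
    ∫ x in Ioc a b, g (r * x) = r⁻¹ • ∫ x in Ioc (r * a) (r * b), g x := by
  rw [← integral_indicator measurableSet_Ioc, ← integral_indicator measurableSet_Ioc,
    ← abs_of_pos (inv_pos.mpr hr), ← Measure.integral_comp_mul_left]
  congr
  ext1 x
  rw [← indicator_comp_right, preimage_const_mul_Ioc₀ _ _ hr, mul_div_cancel_left₀ _ hr.ne',
    mul_div_cancel_left₀ _ hr.ne', Function.comp_def]

theorem integrableOn_rpow_mul_exp_neg_half {s c : ℝ} (hs : -1 < s) (hc : 0 ≤ c) :
    IntegrableOn (fun u : ℝ => u ^ s * exp (-(u / 2))) (Ioi c) := by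
  refine ((integrableOn_rpow_mul_exp_neg_mul_rpow hs one_pos (one_half_pos (α := ℝ))).mono_set
    (Ioi_subset_Ioi hc)).congr_fun (fun u _ => ?_) measurableSet_Ioi
  simp only [rpow_one]
  ring_nf

theorem setIntegral_exp_neg_mul_rpow_Ioi_pos {s c : ℝ} (hs : -1 < s) (hc : 0 ≤ c) :
    0 < ∫ u in Ioi c, exp (-u) * u ^ s := by
  have hint : IntegrableOn (fun u : ℝ => exp (-u) * u ^ s) (Ioi c) :=
    (GammaIntegral_convergent (by linarith : 0 < s + 1)).mono_set (Ioi_subset_Ioi hc)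
      |>.congr_fun (fun u _ => by simp) measurableSet_Ioi
  have hpos : ∀ u ∈ Ioi c, 0 < exp (-u) * u ^ s := fun u hu =>
    mul_pos (exp_pos _) (rpow_pos_of_pos (hc.trans_lt hu) _)
  rw [setIntegral_pos_iff_support_of_nonneg_ae
      ((ae_restrict_mem measurableSet_Ioi).mono fun u hu => (hpos u hu).le) hint,
    inter_eq_right.2 fun u hu => Function.mem_support.2 (hpos u hu).ne', volume_Ioi]
  exact ENNReal.zero_lt_top

theorem div_le_rpow_add_of_potter {l : ℝ → ℝ} {C ε : ℝ} (hC : 0 ≤ C) (hε : 0 ≤ ε)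
    (hPotter : ∀ x y : ℝ, 0 < y → 1 ≤ x → l (x / y) / l x ≤ C * max (y ^ ε) (y ^ (-ε)))
    {b x y : ℝ} (hb : 0 < b) (hby : b ≤ y) (hx : 1 ≤ x) :
    l (x / y) / l x ≤ C * (y ^ ε + b ^ (-ε)) := by
  have hy : 0 < y := hb.trans_le hby
  refine (hPotter x y hy hx).trans (mul_le_mul_of_nonneg_left (max_le ?_ ?_) hC)
  · exact le_add_of_nonneg_right (by positivity)
  · exact (rpow_le_rpow_of_nonpos hb hby (neg_nonpos.2 hε)).trans
      (le_add_of_nonneg_left (by positivity))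

/-- The integrand of `S_x` after `y = u / (x/β)`, divided by `(x/β)^{-(κ-1)} l(x)`. -/
noncomputable def rescaledIntegrand (l : ℝ → ℝ) (β κ x u : ℝ) : ℝ :=
  (1 - u / (x / β)) ^ (x / β - 1) * (l (x / (β * u)) / l x) * u ^ (κ - 1)

section rescaledIntegrand

variable {l : ℝ → ℝ} {β κ x u : ℝ}

theorem rescaledIntegrand_nonneg (hl_pos : ∀ x, 0 < l x) (hu : 0 < u)
    (hux : u ≤ x / β) : 0 ≤ rescaledIntegrand l β κ x u := by
  have hbase : 0 ≤ 1 - u / (x / β) := sub_nonneg.2 (div_le_one_of_le₀ hux (hu.le.trans hux))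
  have := hl_pos (x / (β * u))
  have := hl_pos x
  unfold rescaledIntegrand
  positivity

theorem rescaledIntegrand_le {C ε c : ℝ} (hl_pos : ∀ x, 0 < l x) (hC : 0 ≤ C) (hε : 0 ≤ ε)
    (hPotter : ∀ x y : ℝ, 0 < y → 1 ≤ x → l (x / y) / l x ≤ C * max (y ^ ε) (y ^ (-ε)))
    (hβ : 0 < β) (hc : 0 < c) (hcu : c ≤ u) (hux : u ≤ x / β) (hx1 : 1 ≤ x) (hx2 : 2 * β ≤ x) :
    rescaledIntegrand l β κ x u ≤
      C * (β ^ ε * u ^ (κ - 1 + ε) + (β * c) ^ (-ε) * u ^ (κ - 1)) * exp (-(u / 2)) := by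
  have hu : 0 < u := hc.trans_le hcu
  have hs : 2 ≤ x / β := (le_div_iff₀ hβ).2 (by linarith)
  have hpow := one_sub_div_rpow_le_exp_neg_half hs hu.le hux
  have hratio : l (x / (β * u)) / l x ≤ C * ((β * u) ^ ε + (β * c) ^ (-ε)) :=
    div_le_rpow_add_of_potter hC hε hPotter (by positivity) (by gcongr) hx1
  calc rescaledIntegrand l β κ x u
      ≤ exp (-(u / 2)) * (C * ((β * u) ^ ε + (β * c) ^ (-ε))) * u ^ (κ - 1) := by
        unfold rescaledIntegrand
        gcongr
        exact (div_pos (hl_pos _) (hl_pos _)).le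
    _ = C * (β ^ ε * u ^ (κ - 1 + ε) + (β * c) ^ (-ε) * u ^ (κ - 1)) * exp (-(u / 2)) := by
        rw [mul_rpow hβ.le hu.le, rpow_add hu]
        ring

theorem tendsto_rescaledIntegrand
    (hl_sv : ∀ lam : ℝ, 0 < lam → Tendsto (fun x => l (lam * x) / l x) atTop (𝓝 1))
    (hβ : 0 < β) (hu : 0 < u) :
    Tendsto (fun x => rescaledIntegrand l β κ x u) atTop (𝓝 (exp (-u) * u ^ (κ - 1))) := by
  have hpow := (tendsto_one_sub_div_rpow_sub_one_exp u).comp (tendsto_id.atTop_div_const hβ)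
  have hratio : Tendsto (fun x => l (x / (β * u)) / l x) atTop (𝓝 1) :=
    (hl_sv (β * u)⁻¹ (by positivity)).congr fun x => by rw [inv_mul_eq_div]
  simpa only [mul_one, rescaledIntegrand, Function.comp_def, id] using
    (hpow.mul hratio).mul_const (u ^ (κ - 1))

theorem tendsto_integral_rescaledIntegrand {C ε c : ℝ} (hl_pos : ∀ x, 0 < l x)
    (hl_meas : Measurable l)
    (hl_sv : ∀ lam : ℝ, 0 < lam → Tendsto (fun x => l (lam * x) / l x) atTop (𝓝 1))
    (hC : 0 ≤ C) (hε : 0 ≤ ε)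
    (hPotter : ∀ x y : ℝ, 0 < y → 1 ≤ x → l (x / y) / l x ≤ C * max (y ^ ε) (y ^ (-ε)))
    (hβ : 0 < β) (hκ : 0 < κ) (hc : 0 < c) :
    Tendsto (fun x => ∫ u in Ioc c (x / β), rescaledIntegrand l β κ x u) atTop
      (𝓝 (∫ u in Ioi c, exp (-u) * u ^ (κ - 1))) := by
  have hIoi (x : ℝ) : ∫ u in Ioc c (x / β), rescaledIntegrand l β κ x u =
      ∫ u in Ioi c, (Ioc c (x / β)).indicator (rescaledIntegrand l β κ x) u := by
    rw [setIntegral_indicator measurableSet_Ioc, inter_eq_right.2 Ioc_subset_Ioi_self]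
  simp only [hIoi]
  refine tendsto_integral_filter_of_dominated_convergence
    (fun u => C * (β ^ ε * u ^ (κ - 1 + ε) + (β * c) ^ (-ε) * u ^ (κ - 1)) * exp (-(u / 2)))
    ?_ ?_ ?_ ?_
  · refine .of_forall fun x => (Measurable.indicator ?_ measurableSet_Ioc).aestronglyMeasurable
    unfold rescaledIntegrand
    fun_prop
  · filter_upwards [eventually_ge_atTop (max 1 (2 * β))] with x hx
    filter_upwards [ae_restrict_mem measurableSet_Ioi] with u hu
    by_cases hux : u ∈ Ioc c (x / β)
    · rw [indicator_of_mem hux, Real.norm_of_nonneg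
        (rescaledIntegrand_nonneg hl_pos (hc.trans hu) hux.2)]
      exact rescaledIntegrand_le hl_pos hC hε hPotter hβ hc hux.1.le hux.2
        (le_of_max_le_left hx) (le_of_max_le_right hx)
    · rw [indicator_of_notMem hux, norm_zero]
      have := hc.trans hu
      positivity
  · have hint (s : ℝ) (hs : -1 < s) := integrableOn_rpow_mul_exp_neg_half hs hc.le
    refine IntegrableOn.congr_fun ((((hint (κ - 1 + ε) (by linarith)).const_mul (β ^ ε)).add
      ((hint (κ - 1) (by linarith)).const_mul ((β * c) ^ (-ε)))).const_mul C)
      (fun u _ => by simp only [Pi.add_apply]; ring) measurableSet_Ioi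
  · filter_upwards [ae_restrict_mem measurableSet_Ioi] with u hu
    refine (tendsto_rescaledIntegrand hl_sv hβ (hc.trans hu)).congr' ?_
    filter_upwards [eventually_ge_atTop (β * u)] with x hx
    rw [indicator_of_mem (mem_Ioc.2 ⟨hu, (le_div_iff₀' hβ).2 hx⟩)]

theorem setIntegral_Ioc_eq_rescaledIntegrand (hβ : 0 < β) (hx : 0 < x) (hl : l x ≠ 0)
    {a : ℝ} (ha : 0 ≤ a) :
    ∫ y in Ioc (a / x) 1, (x / β) * (1 - y) ^ (x / β - 1) * l (1 / y) * y ^ (κ - 1) =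
      (x / β) ^ (-(κ - 1)) * l x * ∫ u in Ioc (a / β) (x / β), rescaledIntegrand l β κ x u := by
  have hs : 0 < x / β := div_pos hx hβ
  have hr : 0 < (x / β)⁻¹ := inv_pos.2 hs
  have hsubst := integral_Ioc_comp_mul_left
    (fun y => (x / β) * (1 - y) ^ (x / β - 1) * l (1 / y) * y ^ (κ - 1)) (a / β) (x / β) hr
  rw [show (x / β)⁻¹ * (a / β) = a / x by field_simp, inv_mul_cancel₀ hs.ne', smul_eq_mul,
    inv_inv] at hsubst
  rw [← inv_mul_cancel_left₀ hs.ne' (∫ y in Ioc (a / x) 1, _), ← hsubst, ← integral_const_mul,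
    ← integral_const_mul]
  refine setIntegral_congr_fun measurableSet_Ioc fun u hu => ?_
  have hu0 : 0 < u := (div_nonneg ha hβ.le).trans_lt hu.1
  simp only [rescaledIntegrand, inv_mul_eq_div, one_div_div, div_div]
  rw [div_rpow hu0.le hs.le, rpow_neg hs.le]
  field_simp

end rescaledIntegrand

theorem stmt18_general (m A β κ : ℝ) (hm : 1 < m) (hA : 0 < A) (hβ : 1 ≤ β)
    (hκ1 : 1 < κ)
    (l : ℝ → ℝ) (hl_pos : ∀ x, 0 < l x) (hl_meas : Measurable l)
    (hl_sv : ∀ lam : ℝ, 0 < lam →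
      Tendsto (fun x => l (lam * x) / l x) atTop (nhds 1))
    (C ε : ℝ) (hC : 0 < C) (hε : 0 < ε)
    (hPotter : ∀ x y : ℝ, 0 < y → 1 ≤ x →
      l (x / y) / l x ≤ C * max (y ^ ε) (y ^ (-ε))) :
    (fun x : ℝ => ∫ y in Set.Ioc (A * (m + 1) / x) (1 : ℝ),
        (x / β) * (1 - y) ^ (x / β - 1) * l (1 / y) * y ^ (κ - 1))
      ~[atTop]
    (fun x : ℝ => (x / β) ^ (-(κ - 1)) * l x *
        ∫ y in Set.Ioi (A * (m + 1) / β), Real.exp (-y) * y ^ (κ - 1)) := by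
  have hβ0 : 0 < β := by linarith
  have ha : 0 < A * (m + 1) := mul_pos hA (by linarith)
  have hc : 0 < A * (m + 1) / β := div_pos ha hβ0
  have hI := setIntegral_exp_neg_mul_rpow_Ioi_pos (s := κ - 1) (by linarith) hc.le
  have hJ := tendsto_integral_rescaledIntegrand (κ := κ) hl_pos hl_meas hl_sv hC.le hε.le
    hPotter hβ0 (by linarith) hc
  refine (IsEquivalent.refl.mul ((isEquivalent_const_iff_tendsto hI.ne').2 hJ)).congr_left ?_
  filter_upwards [eventually_gt_atTop 0] with x hx
  exact (setIntegral_Ioc_eq_rescaledIntegrand hβ0 hx (hl_pos x).ne' ha.le).symm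

/-- the truncated Karamata-type integral
`S_x = ∫_{A(m+1)/x}^1 (x/β)(1-y)^{x/β-1} l(1/y) y^{κ-1} dy` satisfies
`S_x ~ (x/β)^{-(κ-1)} l(x) ∫_{A(m+1)/β}^∞ e^{-y} y^{κ-1} dy` as `x → ∞`. -/
theorem stmt18 (m A β κ : ℝ) (hm : 1 < m) (hA : 0 < A) (hβ : 1 ≤ β)
    (hκ1 : 1 < κ) (hκ2 : κ < 2)
    (l : ℝ → ℝ) (hl_pos : ∀ x, 0 < l x) (hl_meas : Measurable l)
    (hl_sv : ∀ lam : ℝ, 0 < lam →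
      Tendsto (fun x => l (lam * x) / l x) atTop (nhds 1))
    (C ε : ℝ) (hC : 0 < C) (hε : 0 < ε) (hεκ : ε < κ - 1)
    (hPotter : ∀ x y : ℝ, 0 < y → 1 ≤ x →
      l (x / y) / l x ≤ C * max (y ^ ε) (y ^ (-ε))) :
    (fun x : ℝ => ∫ y in Set.Ioc (A * (m + 1) / x) (1 : ℝ),
        (x / β) * (1 - y) ^ (x / β - 1) * l (1 / y) * y ^ (κ - 1))
      ~[atTop]
    (fun x : ℝ => (x / β) ^ (-(κ - 1)) * l x *
        ∫ y in Set.Ioi (A * (m + 1) / β), Real.exp (-y) * y ^ (κ - 1)) :=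
  stmt18_general m A β κ hm hA hβ hκ1 l hl_pos hl_meas hl_sv C ε hC hε hPotter
end
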